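/- For g ≥ 2, under the genericity assumptions, the point B = (C_g, C_{−1} − C_{g−1} − (g−1)C_g) satisfies (g+1)C_g < C_{−1} − C_{g−1} − (g−1)C_g < C_{−1} − (g+1)C_g; in particular B lies in the interior of the vertical edge of Γ̃ joining V_0′ = (C_g, (g+1)C_g) and V_0 = (C_g, C_{−1} − (g+1)C_g), and F is not differentiable at B. -/

import Mathlib

/-- The tropical polynomial
`F(X,Y) = min(2Y, Y + min((g+1)X, C_g + gX, …, C_1 + X, C_0), C_{-1})`. -/
noncomputable def tropF (g : ℕ) (Cm1 : ℝ) (C : ℕ → ℝ) (P : ℝ × ℝ) : ℝ :=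
  min (2 * P.2)
    (min
      (P.2 + min (((g : ℝ) + 1) * P.1)
        ((Finset.range (g + 1)).inf' ⟨0, Finset.mem_range.mpr (Nat.succ_pos g)⟩
          (fun i => C i + (i : ℝ) * P.1)))
      Cm1)

/-!
Near `B` only the monomials `Y + (g+1)X` and `Y + C_g + gX` of `F` are minimal, and they tie
exactly on the line `X = C_g`; so along the horizontal line through `B` the function `F` is the
minimum of two affine functions of slopes `g + 1` and `g`, which has a kink. That no other
monomial interferes is where genericity enters: the differences `C_k - C_{k+1}` decrease
strictly and the last one, `C_{g-1} - C_g`, exceeds `C_g`, so `k ↦ C_k + k C_g` strictly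
decreases on `[0, g]`, i.e. at `X = C_g` the term `C_g + gX` beats every `C_i + iX` with `i < g`.
-/

open Filter Topology

section ConvexSequence

variable {C : ℕ → ℝ} {g : ℕ}

theorem strictAntiOn_sub_succ_of_convex
    (h3 : ∀ i, i + 2 ≤ g → C i + C (i + 2) > 2 * C (i + 1)) :
    StrictAntiOn (fun k => C k - C (k + 1)) (Set.Iic (g - 1)) :=
  strictAntiOn_Iic_of_succ_lt fun m hm => by
    have := h3 m (by omega)
    simp only [Order.succ_eq_add_one]
    linarith

theorem strictAntiOn_add_mul_of_convex (h2 : C (g - 1) > 2 * C g)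
    (h3 : ∀ i, i + 2 ≤ g → C i + C (i + 2) > 2 * C (i + 1)) :
    StrictAntiOn (fun k : ℕ => C k + (k : ℝ) * C g) (Set.Iic g) :=
  strictAntiOn_Iic_of_succ_lt fun m hm => by
    have hlast : C (g - 1) - C (g - 1 + 1) ≤ C m - C (m + 1) :=
      (strictAntiOn_sub_succ_of_convex h3).antitoneOn (Set.mem_Iic.mpr (by omega))
        Set.self_mem_Iic (by omega)
    rw [Nat.sub_add_cancel (by omega)] at hlast
    simp only [Order.succ_eq_add_one, Nat.cast_add, Nat.cast_one]
    linarith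

end ConvexSequence

theorem not_differentiableAt_min_affine {a b c : ℝ} (hbc : b ≠ c) :
    ¬ DifferentiableAt ℝ (fun t : ℝ => min (a + b * t) (a + c * t)) 0 := by
  intro hmin
  -- `min p q = (p + q - |p - q|) / 2` recovers `|t|` from the minimum.
  have habs : (fun t : ℝ => |t|) =
      fun t => (a + (b + c) / 2 * t - min (a + b * t) (a + c * t)) * (2 / |b - c|) := by
    have hbc' : |b - c| ≠ 0 := abs_ne_zero.mpr (sub_ne_zero.mpr hbc)
    funext t
    rw [min_def]
    field_simp
    split_ifs with h <;> cases abs_cases (b - c) <;> cases abs_cases t <;> nlinarith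
  refine not_differentiableAt_abs_zero (show DifferentiableAt ℝ (fun t : ℝ => |t|) 0 from ?_)
  rw [habs]
  fun_prop

section TropicalCurve

variable {g : ℕ} {Cm1 : ℝ} {C : ℕ → ℝ}

noncomputable def tropFEdge (g : ℕ) (C : ℕ → ℝ) (P : ℝ × ℝ) : ℝ :=
  P.2 + min (((g : ℝ) + 1) * P.1) (C g + (g : ℝ) * P.1)

theorem continuous_tropFEdge : Continuous (tropFEdge g C) := by
  unfold tropFEdge
  fun_prop

theorem tropF_eq_tropFEdge {P : ℝ × ℝ}
    (hterm : ∀ i < g, C g + (g : ℝ) * P.1 ≤ C i + (i : ℝ) * P.1)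
    (h2Y : tropFEdge g C P ≤ 2 * P.2) (hCm1 : tropFEdge g C P ≤ Cm1) :
    tropF g Cm1 C P = tropFEdge g C P := by
  have hinf : (Finset.range (g + 1)).inf' ⟨0, Finset.mem_range.mpr (Nat.succ_pos g)⟩
      (fun i => C i + (i : ℝ) * P.1) = C g + (g : ℝ) * P.1 := by
    refine le_antisymm (Finset.inf'_le _ (Finset.self_mem_range_succ g)) ?_
    refine Finset.le_inf' _ _ fun i hi => ?_
    rcases (Finset.mem_range_succ_iff.mp hi).lt_or_eq with hlt | rfl
    · exact hterm i hlt
    · exact le_rfl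
  rw [tropF, hinf, ← tropFEdge, min_eq_left hCm1, min_eq_right h2Y]

theorem tropF_eventuallyEq_tropFEdge {P : ℝ × ℝ}
    (hterm : ∀ i < g, C g + (g : ℝ) * P.1 < C i + (i : ℝ) * P.1)
    (h2Y : tropFEdge g C P < 2 * P.2) (hCm1 : tropFEdge g C P < Cm1) :
    tropF g Cm1 C =ᶠ[𝓝 P] tropFEdge g C := by
  have hterm' : ∀ᶠ Q : ℝ × ℝ in 𝓝 P, ∀ i ∈ Finset.range g,
      C g + (g : ℝ) * Q.1 < C i + (i : ℝ) * Q.1 := by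
    rw [eventually_all_finset]
    exact fun i hi => ContinuousAt.eventually_lt (f := fun Q : ℝ × ℝ => C g + (g : ℝ) * Q.1)
      (g := fun Q : ℝ × ℝ => C i + (i : ℝ) * Q.1) (by fun_prop) (by fun_prop)
      (hterm i (Finset.mem_range.mp hi))
  have hedge := continuous_tropFEdge (g := g) (C := C) |>.continuousAt (x := P)
  filter_upwards [hterm', hedge.eventually_lt (continuous_snd.const_mul 2).continuousAt h2Y,
    hedge.eventually_lt continuousAt_const hCm1] with Q hQ h2Q hCm1Q
  exact tropF_eq_tropFEdge (fun i hi => (hQ i (Finset.mem_range.mpr hi)).le) h2Q.le hCm1Q.le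

theorem not_differentiableAt_tropFEdge (y : ℝ) :
    ¬ DifferentiableAt ℝ (tropFEdge g C) (C g, y) := by
  intro hd
  have hline : DifferentiableAt ℝ (fun t : ℝ => tropFEdge g C (C g + t, y)) 0 :=
    DifferentiableAt.comp (f := fun t : ℝ => (C g + t, y)) 0 (by simpa using hd) (by fun_prop)
  have hmin : (fun t : ℝ => tropFEdge g C (C g + t, y)) = fun t =>
      min (y + ((g : ℝ) + 1) * C g + ((g : ℝ) + 1) * t)
        (y + ((g : ℝ) + 1) * C g + (g : ℝ) * t) := by
    funext t
    rw [tropFEdge, ← min_add_add_left]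
    ring_nf
  rw [hmin] at hline
  exact not_differentiableAt_min_affine (by simp) hline

end TropicalCurve

/-- For `g ≥ 2`, under the genericity assumptions, the point
`B = (C_g, C_{-1} - C_{g-1} - (g-1)C_g)` lies in the interior of the vertical
edge of `Γ̃` joining `V_0' = (C_g, (g+1)C_g)` and `V_0 = (C_g, C_{-1} - (g+1)C_g)`,
and `F` is not differentiable at `B`. -/
theorem tropF_point_B (g : ℕ) (hg : 2 ≤ g) (Cm1 : ℝ) (C : ℕ → ℝ)
    (h1 : Cm1 > 2 * C 0) (h2 : C (g - 1) > 2 * C g)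
    (h3 : ∀ i, i + 2 ≤ g → C i + C (i + 2) > 2 * C (i + 1)) :
    ((g : ℝ) + 1) * C g < Cm1 - C (g - 1) - ((g : ℝ) - 1) * C g ∧
    Cm1 - C (g - 1) - ((g : ℝ) - 1) * C g < Cm1 - ((g : ℝ) + 1) * C g ∧
    ¬ DifferentiableAt ℝ (tropF g Cm1 C)
        (C g, Cm1 - C (g - 1) - ((g : ℝ) - 1) * C g) := by
  set y := Cm1 - C (g - 1) - ((g : ℝ) - 1) * C g with hy
  have hanti := strictAntiOn_add_mul_of_convex h2 h3
  have hterm : ∀ i < g, C g + (g : ℝ) * C g < C i + (i : ℝ) * C g := fun i hi =>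
    hanti (Set.mem_Iic.mpr hi.le) Set.self_mem_Iic hi
  have hfirst : C g + (g : ℝ) * C g < C 0 := by simpa using hterm 0 (by omega)
  have hlast : C (g - 1) + ((g : ℝ) - 1) * C g < C 0 := by
    have : C (g - 1) + ((g - 1 : ℕ) : ℝ) * C g < C 0 + ((0 : ℕ) : ℝ) * C g :=
      hanti (Set.mem_Iic.mpr (Nat.zero_le g)) (Set.mem_Iic.mpr (Nat.sub_le g 1)) (by omega)
    rwa [Nat.cast_sub (by omega), Nat.cast_one, Nat.cast_zero, zero_mul, add_zero] at this
  have hlow : ((g : ℝ) + 1) * C g < y := by linarith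
  have hhigh : y < Cm1 - ((g : ℝ) + 1) * C g := by linarith
  have hedge : tropFEdge g C (C g, y) = y + ((g : ℝ) + 1) * C g := by
    rw [tropFEdge, min_eq_left (by linarith)]
  have hlocal : tropF g Cm1 C =ᶠ[𝓝 (C g, y)] tropFEdge g C :=
    tropF_eventuallyEq_tropFEdge hterm (by rw [hedge]; linarith) (by rw [hedge]; linarith)
  exact ⟨hlow, hhigh, fun hd =>
    not_differentiableAt_tropFEdge y (hd.congr_of_eventuallyEq hlocal.symm)⟩
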